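/- (APT translation equivariance.) Let f be a real-valued function on coarse-grid signals invariant under all circular translations of the coarse grid, and define selection probabilities p(k | X) = exp(f(Ψ(X)_k)) / Σ_j exp(f(Ψ(X)_j)). Suppose a volume X has a unique phase k* maximizing p(· | X), and define APT(X) = Ψ(X)_{k*}. Then for any integers g = (g₁,g₂,g₃): T_g X has a unique phase maximizing p(· | T_g X), namely k* ⊕ g (componentwise addition of g modulo the patch sizes), and there exists a coarse-grid translation g′, determined by g and k*, such that APT(T_g X) = T_{g′} APT(X). -/

import Mathlib

noncomputable section

open scoped BigOperators

/-- The well-defined map `ZMod n → ZMod (n*s)` induced by `a ↦ s*a + p`. -/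
def phaseEmb (n s : ℕ) (p : ℤ) (i : ZMod n) : ZMod (n * s) :=
  (s : ZMod (n * s)) * (i.val : ZMod (n * s)) + (p : ZMod (n * s))

/-- Circular translation of a volume by an integer vector `g`:
`(T_g X)(i,j,k) = X(i-g₁, j-g₂, k-g₃)`. -/
def Tvol {D H W : ℕ} (g : ℤ × ℤ × ℤ) (X : ZMod D × ZMod H × ZMod W → ℝ) :
    ZMod D × ZMod H × ZMod W → ℝ :=
  fun v => X (v.1 - (g.1 : ZMod D), v.2.1 - (g.2.1 : ZMod H), v.2.2 - (g.2.2 : ZMod W))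

/-- Circular translation on the coarse grid. -/
def Tcoarse {n₁ n₂ n₃ : ℕ} (h : ℤ × ℤ × ℤ) (Y : ZMod n₁ × ZMod n₂ × ZMod n₃ → ℝ) :
    ZMod n₁ × ZMod n₂ × ZMod n₃ → ℝ :=
  fun v => Y (v.1 - (h.1 : ZMod n₁), v.2.1 - (h.2.1 : ZMod n₂), v.2.2 - (h.2.2 : ZMod n₃))

/-- Polyphase component `Ψ(X)_{(p,q,r)}(i,j,k) = X(s₁·i+p, s₂·j+q, s₃·k+r)`,
for a phase indexed by `Fin s₁ × Fin s₂ × Fin s₃`. -/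
def Psi (s₁ s₂ s₃ n₁ n₂ n₃ : ℕ) (k : Fin s₁ × Fin s₂ × Fin s₃)
    (X : ZMod (n₁ * s₁) × ZMod (n₂ * s₂) × ZMod (n₃ * s₃) → ℝ) :
    ZMod n₁ × ZMod n₂ × ZMod n₃ → ℝ :=
  fun v => X (phaseEmb n₁ s₁ (k.1 : ℤ) v.1, phaseEmb n₂ s₂ (k.2.1 : ℤ) v.2.1,
              phaseEmb n₃ s₃ (k.2.2 : ℤ) v.2.2)

/-- Selection probabilities `p(k | X) = exp(f(Ψ(X)_k)) / Σ_j exp(f(Ψ(X)_j))`. -/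
noncomputable def selProb (s₁ s₂ s₃ n₁ n₂ n₃ : ℕ)
    (f : (ZMod n₁ × ZMod n₂ × ZMod n₃ → ℝ) → ℝ)
    (k : Fin s₁ × Fin s₂ × Fin s₃)
    (X : ZMod (n₁ * s₁) × ZMod (n₂ * s₂) × ZMod (n₃ * s₃) → ℝ) : ℝ :=
  Real.exp (f (Psi s₁ s₂ s₃ n₁ n₂ n₃ k X)) /
    ∑ j : Fin s₁ × Fin s₂ × Fin s₃, Real.exp (f (Psi s₁ s₂ s₃ n₁ n₂ n₃ j X))

/-- Shift of a phase component by an integer, modulo the patch size. -/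
def phAdd {s : ℕ} [NeZero s] (p : Fin s) (g : ℤ) : Fin s :=
  ⟨(((p : ℤ) + g) % (s : ℤ)).toNat, by
    have hs : (0 : ℤ) < (s : ℤ) := by
      exact_mod_cast Nat.pos_of_ne_zero (NeZero.ne s)
    have h1 := Int.emod_nonneg ((p : ℤ) + g) hs.ne'
    have h2 := Int.emod_lt_of_pos ((p : ℤ) + g) hs
    omega⟩

/-- Componentwise shift of a phase triple by an integer vector:
`k ⊕ g = ((p+g₁) mod s₁, (q+g₂) mod s₂, (r+g₃) mod s₃)`. -/
def phAdd3 {s₁ s₂ s₃ : ℕ} [NeZero s₁] [NeZero s₂] [NeZero s₃]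
    (k : Fin s₁ × Fin s₂ × Fin s₃) (g : ℤ × ℤ × ℤ) : Fin s₁ × Fin s₂ × Fin s₃ :=
  (phAdd k.1 g.1, phAdd k.2.1 g.2.1, phAdd k.2.2 g.2.2)


/-!
Write `p + g = s·q + r` with `0 ≤ r < s`. Sampling `T_g X` at phase `r` on the coarse point `i`
reads `X` at `s·i + r - g = s·(i - q) + p`, so `Ψ(T_g X)_{k ⊕ g}` is the coarse translate of
`Ψ(X)_k` by the quotients `q`. Since `f` ignores coarse translations, the scores `f(Ψ(·)_k)`
are merely permuted by `k ↦ k ⊕ g`; the normalising sum is invariant, so the selection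
probabilities are permuted too, and the strict maximiser moves from `k*` to `k* ⊕ g`.
-/

lemma natCast_mul_val_intCast (n s : ℕ) [NeZero n] (a : ℤ) :
    (s : ZMod (n * s)) * ((a : ZMod n).val : ZMod (n * s)) = s * a := by
  have hns : ((n * s : ℕ) : ZMod (n * s)) = 0 := ZMod.natCast_self _
  rw [← Int.cast_natCast (a : ZMod n).val, ZMod.val_intCast, Int.emod_def]
  push_cast at hns ⊢
  linear_combination -(a / n : ℤ) * hns

lemma phaseEmb_intCast (n s : ℕ) [NeZero n] (p a : ℤ) :
    phaseEmb n s p a = s * a + p := by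
  rw [phaseEmb, natCast_mul_val_intCast]

lemma phaseEmb_sub_intCast (n s : ℕ) [NeZero n] {p g q r : ℤ}
    (hdiv : s * q + r = p + g) (i : ZMod n) :
    phaseEmb n s r i - g = phaseEmb n s p (i - q) := by
  obtain ⟨a, rfl⟩ := ZMod.intCast_surjective i
  rw [← Int.cast_sub, phaseEmb_intCast, phaseEmb_intCast]
  have hdiv' := congrArg (fun z : ℤ => (z : ZMod (n * s))) hdiv
  push_cast at hdiv' ⊢
  linear_combination hdiv'

section PhaseShift

variable {s : ℕ} [NeZero s]

lemma phAdd_coe (p : Fin s) (g : ℤ) : ((phAdd p g : Fin s) : ℤ) = ((p : ℤ) + g) % s := by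
  have hs : (s : ℤ) ≠ 0 := by exact_mod_cast NeZero.ne s
  exact Int.toNat_of_nonneg (Int.emod_nonneg _ hs)

lemma phAdd_phAdd (p : Fin s) (g h : ℤ) : phAdd (phAdd p g) h = phAdd p (g + h) := by
  apply Fin.ext
  rw [← Int.natCast_inj, phAdd_coe, phAdd_coe, phAdd_coe, Int.emod_add_emod, add_assoc]

lemma phAdd_zero (p : Fin s) : phAdd p 0 = p := by
  apply Fin.ext
  simp only [phAdd, add_zero]
  rw [Int.emod_eq_of_lt (by positivity) (by exact_mod_cast p.isLt), Int.toNat_natCast]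

def phAddEquiv (g : ℤ) : Equiv.Perm (Fin s) where
  toFun p := phAdd p g
  invFun p := phAdd p (-g)
  left_inv p := by simp only [phAdd_phAdd, add_neg_cancel, phAdd_zero]
  right_inv p := by simp only [phAdd_phAdd, neg_add_cancel, phAdd_zero]

end PhaseShift

def phAdd3Equiv {s₁ s₂ s₃ : ℕ} [NeZero s₁] [NeZero s₂] [NeZero s₃] (g : ℤ × ℤ × ℤ) :
    Equiv.Perm (Fin s₁ × Fin s₂ × Fin s₃) :=
  (phAddEquiv g.1).prodCongr ((phAddEquiv g.2.1).prodCongr (phAddEquiv g.2.2))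

lemma phAdd3Equiv_apply {s₁ s₂ s₃ : ℕ} [NeZero s₁] [NeZero s₂] [NeZero s₃]
    (g : ℤ × ℤ × ℤ) (k : Fin s₁ × Fin s₂ × Fin s₃) : phAdd3Equiv g k = phAdd3 k g :=
  rfl

lemma Equiv.forall_ne_lt_apply {ι κ α : Type*} [LT α] (σ : ι ≃ κ) {P : ι → α} {Q : κ → α}
    (hQ : ∀ k, Q (σ k) = P k) {k₀ : ι} (hmax : ∀ k, k ≠ k₀ → P k < P k₀) :
    ∀ k, k ≠ σ k₀ → Q k < Q (σ k₀) := by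
  intro k hk
  rw [← σ.apply_symm_apply k, hQ, hQ]
  exact hmax _ fun h => hk (by rw [← h, σ.apply_symm_apply])

section Polyphase

variable {s₁ s₂ s₃ n₁ n₂ n₃ : ℕ}
  [NeZero s₁] [NeZero s₂] [NeZero s₃] [NeZero n₁] [NeZero n₂] [NeZero n₃]

lemma Psi_phAdd3_Tvol (k : Fin s₁ × Fin s₂ × Fin s₃) (g : ℤ × ℤ × ℤ)
    (X : ZMod (n₁ * s₁) × ZMod (n₂ * s₂) × ZMod (n₃ * s₃) → ℝ) :
    Psi s₁ s₂ s₃ n₁ n₂ n₃ (phAdd3 k g) (Tvol g X)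
      = Tcoarse (((k.1 : ℤ) + g.1) / s₁, ((k.2.1 : ℤ) + g.2.1) / s₂,
          ((k.2.2 : ℤ) + g.2.2) / s₃) (Psi s₁ s₂ s₃ n₁ n₂ n₃ k X) := by
  funext v
  simp only [Psi, Tvol, Tcoarse, phAdd3, phAdd_coe]
  rw [phaseEmb_sub_intCast n₁ s₁ (Int.mul_ediv_add_emod _ _),
    phaseEmb_sub_intCast n₂ s₂ (Int.mul_ediv_add_emod _ _),
    phaseEmb_sub_intCast n₃ s₃ (Int.mul_ediv_add_emod _ _)]

lemma selProb_phAdd3_Tvol (f : (ZMod n₁ × ZMod n₂ × ZMod n₃ → ℝ) → ℝ)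
    (hf : ∀ (h : ℤ × ℤ × ℤ) (Y : ZMod n₁ × ZMod n₂ × ZMod n₃ → ℝ), f (Tcoarse h Y) = f Y)
    (k : Fin s₁ × Fin s₂ × Fin s₃) (g : ℤ × ℤ × ℤ)
    (X : ZMod (n₁ * s₁) × ZMod (n₂ * s₂) × ZMod (n₃ * s₃) → ℝ) :
    selProb s₁ s₂ s₃ n₁ n₂ n₃ f (phAdd3 k g) (Tvol g X) = selProb s₁ s₂ s₃ n₁ n₂ n₃ f k X := by
  have hscore : ∀ j, f (Psi s₁ s₂ s₃ n₁ n₂ n₃ (phAdd3Equiv g j) (Tvol g X))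
      = f (Psi s₁ s₂ s₃ n₁ n₂ n₃ j X) := fun j => by
    rw [phAdd3Equiv_apply, Psi_phAdd3_Tvol, hf]
  rw [selProb, selProb, ← phAdd3Equiv_apply, hscore,
    ← Equiv.sum_comp (phAdd3Equiv g)]
  simp only [hscore]

end Polyphase

/-- **APT translation equivariance.**  Let `f` be invariant under all
circular translations of the coarse grid and define selection probabilities as above.
If `X` has a unique phase `k*` maximizing `p(· | X)`, then for any translation `g`:
`T_g X` has a unique maximizing phase, namely `k* ⊕ g`, and there exists a coarse-grid
translation `g'` with `APT(T_g X) = T_{g'} APT(X)`, where `APT(Y) = Ψ(Y)_{k̂(Y)}` for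
the unique maximizing phase `k̂(Y)` of `Y`. -/
theorem apt_translation_equivariance
    (s₁ s₂ s₃ n₁ n₂ n₃ : ℕ)
    [NeZero s₁] [NeZero s₂] [NeZero s₃] [NeZero n₁] [NeZero n₂] [NeZero n₃]
    (f : (ZMod n₁ × ZMod n₂ × ZMod n₃ → ℝ) → ℝ)
    (hf : ∀ (h : ℤ × ℤ × ℤ) (Y : ZMod n₁ × ZMod n₂ × ZMod n₃ → ℝ),
      f (Tcoarse h Y) = f Y)
    (X : ZMod (n₁ * s₁) × ZMod (n₂ * s₂) × ZMod (n₃ * s₃) → ℝ)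
    (kstar : Fin s₁ × Fin s₂ × Fin s₃)
    (hmax : ∀ k : Fin s₁ × Fin s₂ × Fin s₃, k ≠ kstar →
      selProb s₁ s₂ s₃ n₁ n₂ n₃ f k X < selProb s₁ s₂ s₃ n₁ n₂ n₃ f kstar X)
    (g₁ g₂ g₃ : ℤ) :
    (∀ k : Fin s₁ × Fin s₂ × Fin s₃, k ≠ phAdd3 kstar (g₁, g₂, g₃) →
      selProb s₁ s₂ s₃ n₁ n₂ n₃ f k (Tvol (g₁, g₂, g₃) X)
        < selProb s₁ s₂ s₃ n₁ n₂ n₃ f (phAdd3 kstar (g₁, g₂, g₃))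
            (Tvol (g₁, g₂, g₃) X))
    ∧ ∃ g' : ℤ × ℤ × ℤ,
        Psi s₁ s₂ s₃ n₁ n₂ n₃ (phAdd3 kstar (g₁, g₂, g₃)) (Tvol (g₁, g₂, g₃) X)
          = Tcoarse g' (Psi s₁ s₂ s₃ n₁ n₂ n₃ kstar X) := by
  refine ⟨?_, _, Psi_phAdd3_Tvol kstar (g₁, g₂, g₃) X⟩
  exact (phAdd3Equiv (g₁, g₂, g₃)).forall_ne_lt_apply
    (fun k => selProb_phAdd3_Tvol f hf k (g₁, g₂, g₃) X) hmax
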